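/- Let J_d ∈ ℝ^{3×3} be symmetric with J = tr(J_d)I₃ − J_d, and let f ∈ ℝ³ be nonzero with F = exp(S(f)). Then F J_d − J_d Fᵀ = S(G(f)), where G(f) = (sin‖f‖/‖f‖) J f + ((1 − cos‖f‖)/‖f‖²) (f × J f). -/
import Mathlib


open Matrix

noncomputable section

/-- The hat map `S : ℝ³ → ℝ^{3×3}`, `S(x) y = x × y`. -/
def hat (x : Fin 3 → ℝ) : Matrix (Fin 3) (Fin 3) ℝ :=
  !![0, -x 2, x 1; x 2, 0, -x 0; -x 1, x 0, 0]

/-- Cross product on `ℝ³`. -/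
def cross (x y : Fin 3 → ℝ) : Fin 3 → ℝ :=
  ![x 1 * y 2 - x 2 * y 1, x 2 * y 0 - x 0 * y 2, x 0 * y 1 - x 1 * y 0]

/-- Euclidean norm on `ℝ³`. -/
def enorm3 (x : Fin 3 → ℝ) : ℝ := Real.sqrt (x 0 ^ 2 + x 1 ^ 2 + x 2 ^ 2)

/-- Matrix exponential on `ℝ^{3×3}`. -/
def mexp (A : Matrix (Fin 3) (Fin 3) ℝ) : Matrix (Fin 3) (Fin 3) ℝ :=
  ∑' n : ℕ, ((n.factorial : ℝ)⁻¹) • A ^ n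

lemma hat_cube (f : Fin 3 → ℝ) :
    hat f ^ 3 = (-(f 0 ^ 2 + f 1 ^ 2 + f 2 ^ 2)) • hat f := by
  rw [pow_succ, pow_two]
  ext i j
  fin_cases i <;> fin_cases j <;>
    simp [hat, Matrix.mul_apply, Fin.sum_univ_three] <;> ring

lemma hat_pow_odd (f : Fin 3 → ℝ) (k : ℕ) :
    hat f ^ (2 * k + 1) = ((-(f 0 ^ 2 + f 1 ^ 2 + f 2 ^ 2)) ^ k) • hat f := by
  induction k with
  | zero => simp
  | succ n ih =>
      calc hat f ^ (2 * (n + 1) + 1) = hat f ^ (2 * n + 1) * hat f ^ 2 := by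
            rw [← pow_add]; congr 1
        _ = (-(f 0 ^ 2 + f 1 ^ 2 + f 2 ^ 2)) ^ n • (hat f * hat f ^ 2) := by
            rw [ih, smul_mul_assoc]
        _ = (-(f 0 ^ 2 + f 1 ^ 2 + f 2 ^ 2)) ^ n • hat f ^ 3 := by
            rw [← pow_succ']
        _ = (-(f 0 ^ 2 + f 1 ^ 2 + f 2 ^ 2)) ^ (n + 1) • hat f := by
            rw [hat_cube, smul_smul, ← pow_succ]

lemma hat_pow_even (f : Fin 3 → ℝ) (k : ℕ) :
    hat f ^ (2 * k + 2) = ((-(f 0 ^ 2 + f 1 ^ 2 + f 2 ^ 2)) ^ k) • hat f ^ 2 := by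
  calc hat f ^ (2 * k + 2) = hat f ^ (2 * k + 1) * hat f := by rw [← pow_succ]
    _ = (-(f 0 ^ 2 + f 1 ^ 2 + f 2 ^ 2)) ^ k • (hat f * hat f) := by
        rw [hat_pow_odd, smul_mul_assoc]
    _ = _ := by rw [← pow_two]

lemma hasSum_sin_div (r : ℝ) (hr : r ≠ 0) :
    HasSum (fun n : ℕ => (-(r ^ 2)) ^ n / ((2 * n + 1).factorial : ℝ))
      (Real.sin r / r) := by
  have h := (Real.hasSum_sin r).mul_left r⁻¹
  have key : ∀ n : ℕ, (-(r ^ 2)) ^ n / ((2 * n + 1).factorial : ℝ)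
      = r⁻¹ * ((-1) ^ n * r ^ (2 * n + 1) / ((2 * n + 1).factorial : ℝ)) := by
    intro n
    have hfac : ((2 * n + 1).factorial : ℝ) ≠ 0 :=
      Nat.cast_ne_zero.mpr (Nat.factorial_ne_zero _)
    rw [neg_pow, ← pow_mul]
    field_simp
    ring
  rw [show Real.sin r / r = r⁻¹ * Real.sin r by field_simp]
  simpa [key] using h

lemma hasSum_cos_div (r : ℝ) (hr : r ≠ 0) :
    HasSum (fun n : ℕ => (-(r ^ 2)) ^ n / ((2 * n + 2).factorial : ℝ))
      ((1 - Real.cos r) / r ^ 2) := by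
  have h1 : HasSum (fun n : ℕ => (-1) ^ (n + 1) * r ^ (2 * (n + 1)) / ((2 * (n + 1)).factorial : ℝ))
      (Real.cos r - 1) := by
    refine (hasSum_nat_add_iff
      (f := fun n : ℕ => (-1) ^ n * r ^ (2 * n) / ((2 * n).factorial : ℝ)) 1).mpr ?_
    simpa using Real.hasSum_cos r
  have h2 := h1.mul_left (-(r ^ 2))⁻¹
  have hr2 : (r : ℝ) ^ 2 ≠ 0 := pow_ne_zero _ hr
  have key : ∀ n : ℕ, (-(r ^ 2)) ^ n / ((2 * n + 2).factorial : ℝ)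
      = (-(r ^ 2))⁻¹ * ((-1) ^ (n + 1) * r ^ (2 * (n + 1)) / ((2 * (n + 1)).factorial : ℝ)) := by
    intro n
    have h22 : 2 * (n + 1) = 2 * n + 2 := by ring
    have hfac : ((2 * n + 2).factorial : ℝ) ≠ 0 :=
      Nat.cast_ne_zero.mpr (Nat.factorial_ne_zero _)
    rw [h22, show ((-1:ℝ)) ^ (n+1) = (-1) ^ n * (-1) from pow_succ _ _,
      show (r:ℝ) ^ (2*n+2) = r ^ (2*n) * r ^ 2 from by rw [pow_add],
      show (-(r^2):ℝ) ^ n = (-1) ^ n * r ^ (2*n) from by rw [neg_pow, ← pow_mul]]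
    field_simp
  rw [show (1 - Real.cos r) / r ^ 2 = (-(r ^ 2))⁻¹ * (Real.cos r - 1) by field_simp; ring]
  simpa [key] using h2

lemma enorm3_sq (f : Fin 3 → ℝ) : enorm3 f ^ 2 = f 0 ^ 2 + f 1 ^ 2 + f 2 ^ 2 := by
  have : (0 : ℝ) ≤ f 0 ^ 2 + f 1 ^ 2 + f 2 ^ 2 := by positivity
  rw [enorm3, Real.sq_sqrt this]

lemma enorm3_ne_zero (f : Fin 3 → ℝ) (hf : f ≠ 0) : enorm3 f ≠ 0 := by
  obtain ⟨i, hi⟩ : ∃ i, f i ≠ 0 := by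
    by_contra h; push_neg at h; exact hf (funext h)
  have hpos : 0 < f 0 ^ 2 + f 1 ^ 2 + f 2 ^ 2 := by
    fin_cases i <;> positivity
  rw [enorm3]
  positivity

lemma rodrigues (f : Fin 3 → ℝ) (hf : f ≠ 0) :
    mexp (hat f) = 1 + (Real.sin (enorm3 f) / enorm3 f) • hat f
      + ((1 - Real.cos (enorm3 f)) / (enorm3 f) ^ 2) • hat f ^ 2 := by
  set r := enorm3 f with hr
  have hrne : r ≠ 0 := enorm3_ne_zero f hf
  have hr2 : -(r ^ 2) = -(f 0 ^ 2 + f 1 ^ 2 + f 2 ^ 2) := by rw [enorm3_sq]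
  set F : ℕ → Matrix (Fin 3) (Fin 3) ℝ := fun n => ((n.factorial : ℝ)⁻¹) • hat f ^ n with hF
  have hodd : HasSum (fun k => F (2 * k + 1)) ((Real.sin r / r) • hat f) := by
    have h := (hasSum_sin_div r hrne).smul_const (hat f)
    refine h.congr_fun fun k => ?_
    rw [hF]
    simp only [hat_pow_odd, ← hr2, smul_smul]
    congr 1
    field_simp
  have hshift : HasSum (fun k => F (2 * (k + 1))) (((1 - Real.cos r) / r ^ 2) • hat f ^ 2) := by
    have h := (hasSum_cos_div r hrne).smul_const (hat f ^ 2)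
    refine h.congr_fun fun k => ?_
    rw [hF]
    have h22 : 2 * (k + 1) = 2 * k + 2 := by ring
    simp only [h22, hat_pow_even, ← hr2, smul_smul]
    congr 1
    field_simp
  have heven : HasSum (fun k => F (2 * k))
      (((1 - Real.cos r) / r ^ 2) • hat f ^ 2 + 1) := by
    have := (hasSum_nat_add_iff (f := fun k => F (2 * k)) 1).mp hshift
    simpa [hF] using this
  have htot := heven.even_add_odd hodd
  rw [mexp, htot.tsum_eq]
  abel

lemma hat_transpose (f : Fin 3 → ℝ) : (hat f)ᵀ = -hat f := by
  ext i j
  fin_cases i <;> fin_cases j <;> simp [hat]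

lemma hat_add (x y : Fin 3 → ℝ) : hat (x + y) = hat x + hat y := by
  ext i j
  fin_cases i <;> fin_cases j <;> simp [hat] <;> ring

lemma hat_smul (c : ℝ) (x : Fin 3 → ℝ) : hat (c • x) = c • hat x := by
  ext i j
  fin_cases i <;> fin_cases j <;> simp [hat]

lemma key1 (Jd : Matrix (Fin 3) (Fin 3) ℝ) (hJd : Jd = Jdᵀ) (f : Fin 3 → ℝ) :
    hat f * Jd + Jd * hat f
      = hat ((Jd.trace • (1 : Matrix (Fin 3) (Fin 3) ℝ) - Jd).mulVec f) := by
  have h10 : Jd 1 0 = Jd 0 1 := by nth_rewrite 1 [hJd]; rfl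
  have h20 : Jd 2 0 = Jd 0 2 := by nth_rewrite 1 [hJd]; rfl
  have h21 : Jd 2 1 = Jd 1 2 := by nth_rewrite 1 [hJd]; rfl
  ext i j
  fin_cases i <;> fin_cases j <;>
    simp [hat, Matrix.mul_apply, Matrix.vecMul, Matrix.mulVec, dotProduct, Fin.sum_univ_three,
      Matrix.trace, Matrix.diag, Matrix.one_apply, h10, h20, h21] <;> ring

lemma key2 (Jd : Matrix (Fin 3) (Fin 3) ℝ) (hJd : Jd = Jdᵀ) (f : Fin 3 → ℝ) :
    hat f ^ 2 * Jd - Jd * hat f ^ 2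
      = hat (cross f ((Jd.trace • (1 : Matrix (Fin 3) (Fin 3) ℝ) - Jd).mulVec f)) := by
  have h10 : Jd 1 0 = Jd 0 1 := by nth_rewrite 1 [hJd]; rfl
  have h20 : Jd 2 0 = Jd 0 2 := by nth_rewrite 1 [hJd]; rfl
  have h21 : Jd 2 1 = Jd 1 2 := by nth_rewrite 1 [hJd]; rfl
  rw [pow_two]
  ext i j
  fin_cases i <;> fin_cases j <;>
    simp [hat, cross, Matrix.mul_apply, Matrix.vecMul, Matrix.mulVec, dotProduct, Fin.sum_univ_three,
      Matrix.trace, Matrix.diag, Matrix.one_apply, h10, h20, h21] <;> ring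

theorem lyapunov_like_to_vector (Jd : Matrix (Fin 3) (Fin 3) ℝ) (hJd : Jd = Jdᵀ)
    (f : Fin 3 → ℝ) (hf : f ≠ 0) :
    mexp (hat f) * Jd - Jd * (mexp (hat f))ᵀ =
      hat ((Real.sin (enorm3 f) / enorm3 f) •
            ((Jd.trace • (1 : Matrix (Fin 3) (Fin 3) ℝ) - Jd).mulVec f) +
          ((1 - Real.cos (enorm3 f)) / (enorm3 f) ^ 2) •
            cross f ((Jd.trace • (1 : Matrix (Fin 3) (Fin 3) ℝ) - Jd).mulVec f)) := by
  set a := Real.sin (enorm3 f) / enorm3 f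
  set b := (1 - Real.cos (enorm3 f)) / (enorm3 f) ^ 2
  have hsq : (hat f ^ 2)ᵀ = hat f ^ 2 := by
    rw [pow_two, Matrix.transpose_mul, hat_transpose, neg_mul_neg, ← pow_two]
  rw [rodrigues f hf, hat_add, hat_smul, hat_smul, ← key1 Jd hJd f, ← key2 Jd hJd f,
    Matrix.transpose_add, Matrix.transpose_add, Matrix.transpose_one,
    Matrix.transpose_smul, Matrix.transpose_smul, hat_transpose, hsq]
  simp only [add_mul, mul_add, one_mul, mul_one, smul_mul_assoc, Matrix.mul_smul,
    mul_neg, Matrix.mul_neg, smul_neg, smul_add, smul_sub]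
  abel
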